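/- arXiv:2001.02608 — 2 statements merged into one kernel-verified Lean document; each statement's English description precedes it below -/
import Mathlib

section
/- Let F, G, H, I be finite groups, and let U ≤ F × G, V ≤ G × H, W ≤ H × I be subgroups. Then |k₂(U) ∩ k₁(V)| · |k₂(U * V) ∩ k₁(W)| = |k₂(U) ∩ k₁(V * W)| · |k₂(V) ∩ k₁(W)|, where |·| denotes the order of a subgroup. -/
/-!
Both sides are the order of `M = V ∩ (k₂(U) × k₁(W)) ≤ G × H`, computed by the first isomorphism
theorem for its two projections: projecting to `H` has kernel `k₂(U) ∩ k₁(V)` and image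
`k₂(U * V) ∩ k₁(W)`, projecting to `G` has kernel `k₂(V) ∩ k₁(W)` and image `k₂(U) ∩ k₁(V * W)`.
-/

open scoped Classical

namespace SubgroupCat

variable {R S T : Type*}

/-- The star product of subgroups `U ≤ R × S` and `V ≤ S × T`:
`U * V = {(r, t) | ∃ s, (r, s) ∈ U ∧ (s, t) ∈ V}`. -/
def starProd [Group R] [Group S] [Group T] (U : Subgroup (R × S)) (V : Subgroup (S × T)) :
    Subgroup (R × T) where
  carrier := {rt | ∃ s : S, (rt.1, s) ∈ U ∧ (s, rt.2) ∈ V}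
  one_mem' := ⟨1, one_mem U, one_mem V⟩
  mul_mem' := by
    rintro a b ⟨s, hU, hV⟩ ⟨s', hU', hV'⟩
    exact ⟨s * s', mul_mem hU hU', mul_mem hV hV'⟩
  inv_mem' := by
    rintro a ⟨s, hU, hV⟩
    exact ⟨s⁻¹, inv_mem hU, inv_mem hV⟩

@[simp] lemma mem_starProd [Group R] [Group S] [Group T] {U : Subgroup (R × S)}
    {V : Subgroup (S × T)} {p : R × T} :
    p ∈ starProd U V ↔ ∃ s : S, (p.1, s) ∈ U ∧ (s, p.2) ∈ V := Iff.rfl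

/-- First kernel `k₁(U) = {r | (r, 1) ∈ U}`. -/
def k1 [Group R] [Group S] (U : Subgroup (R × S)) : Subgroup R :=
  U.comap (MonoidHom.inl R S)

/-- Second kernel `k₂(U) = {s | (1, s) ∈ U}`. -/
def k2 [Group R] [Group S] (U : Subgroup (R × S)) : Subgroup S :=
  U.comap (MonoidHom.inr R S)

section

variable [Group R] [Group S] [Group T]

lemma mem_k1 {U : Subgroup (R × S)} {r : R} :
    r ∈ k1 U ↔ ((r, 1) : R × S) ∈ U := Iff.rfl

lemma mem_k2 {U : Subgroup (R × S)} {s : S} :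
    s ∈ k2 U ↔ ((1, s) : R × S) ∈ U := Iff.rfl

lemma _root_.Subgroup.card_eq_card_inf_ker_mul_card_map (K : Subgroup R)
    (f : R →* S) : Nat.card K = Nat.card ↥(K ⊓ f.ker) * Nat.card ↥(K.map f) := by
  rw [← Subgroup.relIndex_ker, ← (f.ker.subgroupOf K).card_mul_index, Subgroup.relIndex,
    ← Subgroup.inf_subgroupOf_left,
    Nat.card_congr (Subgroup.subgroupOfEquivOfLe inf_le_left).toEquiv]

lemma map_inr_k2 (K : Subgroup (R × S)) :
    (k2 K).map (MonoidHom.inr R S) = K ⊓ (MonoidHom.fst R S).ker := by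
  ext ⟨r, s⟩
  simp only [Subgroup.mem_map, MonoidHom.inr_apply, mem_k2, Subgroup.mem_inf, MonoidHom.mem_ker,
    MonoidHom.coe_fst, Prod.mk.injEq]
  constructor
  · rintro ⟨s', hK, rfl, rfl⟩
    exact ⟨hK, rfl⟩
  · rintro ⟨hK, rfl : r = 1⟩
    exact ⟨s, hK, rfl, rfl⟩

lemma map_inl_k1 (K : Subgroup (R × S)) :
    (k1 K).map (MonoidHom.inl R S) = K ⊓ (MonoidHom.snd R S).ker := by
  ext ⟨r, s⟩
  simp only [Subgroup.mem_map, MonoidHom.inl_apply, mem_k1, Subgroup.mem_inf, MonoidHom.mem_ker,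
    MonoidHom.coe_snd, Prod.mk.injEq]
  constructor
  · rintro ⟨r', hK, rfl, rfl⟩
    exact ⟨hK, rfl⟩
  · rintro ⟨hK, rfl : s = 1⟩
    exact ⟨r, hK, rfl, rfl⟩

lemma card_eq_card_k2_mul_card_map_fst (K : Subgroup (R × S)) :
    Nat.card K = Nat.card ↥(k2 K) * Nat.card ↥(K.map (MonoidHom.fst R S)) := by
  rw [K.card_eq_card_inf_ker_mul_card_map (MonoidHom.fst R S), ← map_inr_k2,
    Subgroup.card_map_of_injective (Prod.mk_right_injective (1 : R))]

lemma card_eq_card_k1_mul_card_map_snd (K : Subgroup (R × S)) :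
    Nat.card K = Nat.card ↥(k1 K) * Nat.card ↥(K.map (MonoidHom.snd R S)) := by
  rw [K.card_eq_card_inf_ker_mul_card_map (MonoidHom.snd R S), ← map_inl_k1,
    Subgroup.card_map_of_injective (Prod.mk_left_injective (1 : S))]

lemma k1_inf_prod (V : Subgroup (R × S)) (A : Subgroup R) (B : Subgroup S) :
    k1 (V ⊓ A.prod B) = A ⊓ k1 V := by
  ext r
  simp [mem_k1, Subgroup.mem_prod, and_comm]

lemma k2_inf_prod (V : Subgroup (R × S)) (A : Subgroup R) (B : Subgroup S) :
    k2 (V ⊓ A.prod B) = k2 V ⊓ B := by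
  ext s
  simp [mem_k2, Subgroup.mem_prod]

lemma map_fst_inf_prod_k1 (V : Subgroup (R × S))
    (W : Subgroup (S × T)) (A : Subgroup R) :
    (V ⊓ A.prod (k1 W)).map (MonoidHom.fst R S) = A ⊓ k1 (starProd V W) := by
  ext r
  simp only [Subgroup.mem_map, Subgroup.mem_inf, Subgroup.mem_prod, mem_k1, mem_starProd,
    MonoidHom.coe_fst, Prod.exists, exists_and_right, exists_eq_right]
  constructor
  · rintro ⟨s, hV, hA, hW⟩
    exact ⟨hA, s, hV, hW⟩
  · rintro ⟨hA, s, hV, hW⟩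
    exact ⟨s, hV, hA, hW⟩

lemma map_snd_inf_k2_prod (U : Subgroup (R × S))
    (V : Subgroup (S × T)) (B : Subgroup T) :
    (V ⊓ (k2 U).prod B).map (MonoidHom.snd S T) = k2 (starProd U V) ⊓ B := by
  ext t
  simp only [Subgroup.mem_map, Subgroup.mem_inf, Subgroup.mem_prod, mem_k2, mem_starProd,
    MonoidHom.coe_snd, Prod.exists, exists_eq_right]
  constructor
  · rintro ⟨s, hV, hU, hB⟩
    exact ⟨⟨s, hU, hV⟩, hB⟩
  · rintro ⟨⟨s, hU, hV⟩, hB⟩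
    exact ⟨s, hV, hU, hB⟩

end

theorem card_inter_star_mul_general (F G H I : Type*) [Group F] [Group G] [Group H] [Group I]
    (U : Subgroup (F × G)) (V : Subgroup (G × H)) (W : Subgroup (H × I)) :
    Nat.card ↥(k2 U ⊓ k1 V) * Nat.card ↥(k2 (starProd U V) ⊓ k1 W) =
      Nat.card ↥(k2 U ⊓ k1 (starProd V W)) * Nat.card ↥(k2 V ⊓ k1 W) := by
  set M := V ⊓ (k2 U).prod (k1 W)
  have h₁ := card_eq_card_k1_mul_card_map_snd M
  have h₂ := card_eq_card_k2_mul_card_map_fst M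
  rw [k1_inf_prod, map_snd_inf_k2_prod] at h₁
  rw [k2_inf_prod, map_fst_inf_prod_k1] at h₂
  rw [← h₁, h₂, mul_comm]

/-- **Boltje–Danz.** For finite groups `F, G, H, I` and subgroups `U ≤ F × G`,
`V ≤ G × H`, `W ≤ H × I`, one has
`|k₂(U) ∩ k₁(V)| · |k₂(U * V) ∩ k₁(W)| = |k₂(U) ∩ k₁(V * W)| · |k₂(V) ∩ k₁(W)|`. -/
theorem card_inter_star_mul (F G H I : Type*) [Group F] [Group G] [Group H] [Group I]
    [Finite F] [Finite G] [Finite H] [Finite I]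
    (U : Subgroup (F × G)) (V : Subgroup (G × H)) (W : Subgroup (H × I)) :
    Nat.card ↥(k2 U ⊓ k1 V) * Nat.card ↥(k2 (starProd U V) ⊓ k1 W) =
      Nat.card ↥(k2 U ⊓ k1 (starProd V W)) * Nat.card ↥(k2 V ⊓ k1 W) :=
  card_inter_star_mul_general F G H I U V W

end SubgroupCat
end

section
/- Let F, G, H be finite groups and let I ≤ F × G, J ≤ G × H, K ≤ F × H be subgroups. If τ_K^{I,J} ≠ 0, then p₂(I) = p₁(J) (the pair (I, J) is strongly compatible), K ≤ I * J, p₁(K) = p₁(I * J), and p₂(K) = p₂(I * J) (K is an adequate subgroup of I * J). -/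
open scoped Classical

namespace SubgroupCat

variable {R S T : Type*}

/-- First projection `p₁(U) = {r | ∃ s, (r, s) ∈ U}`. -/
def p1 [Group R] [Group S] (U : Subgroup (R × S)) : Subgroup R :=
  U.map (MonoidHom.fst R S)

/-- Second projection `p₂(U) = {s | ∃ r, (r, s) ∈ U}`. -/
def p2 [Group R] [Group S] (U : Subgroup (R × S)) : Subgroup S :=
  U.map (MonoidHom.snd R S)

/-- The Möbius function of a finite poset: `pmoeb u i` is `möb(u, i)`. -/
noncomputable def pmoeb {P : Type*} [PartialOrder P] [Finite P] (u i : P) : ℤ :=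
  if u = i then 1
  else if u < i then
    - ∑ v ∈ ({v : P | u < v ∧ v ≤ i}.toFinite.toFinset).attach, pmoeb v.1 i
  else 0
termination_by Nat.card {w : P // u ≤ w}
decreasing_by
  · have hv := v.2
    rw [Set.Finite.mem_toFinset] at hv
    have hlt : u < (v : P) := hv.1
    have hsub : {w : P | (v : P) ≤ w} ⊂ {w : P | u ≤ w} :=
      ⟨fun w hw => le_trans hlt.le hw,
       fun hcon => absurd (hcon (le_refl u)) (by simpa using (lt_iff_le_not_ge.1 hlt).2)⟩
    rw [show {w : P // (v : P) ≤ w} = ↑{w : P | (v : P) ≤ w} from rfl,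
      show {w : P // u ≤ w} = ↑{w : P | u ≤ w} from rfl,
      Nat.card_coe_set_eq, Nat.card_coe_set_eq]
    exact Set.ncard_lt_ncard hsub (Set.toFinite _)

/-- `möb(U, I)` for subgroups of a finite group: the Möbius function of the
subgroup lattice. -/
noncomputable def moeb {G : Type*} [Group G] [Finite G] (U I : Subgroup G) : ℤ :=
  pmoeb U I

/-- `ℓ(A) = ℓ(|A|)` for a finite group `A`, where `ℓ : ℕ⁺ →* 𝕂ˣ`. -/
noncomputable def ellG {𝕂 : Type*} [Field 𝕂] (ℓ : ℕ+ →* 𝕂ˣ) (A : Type*) [Group A] [Finite A] :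
    𝕂 :=
  (ℓ ⟨Nat.card A, Nat.card_pos⟩ : 𝕂ˣ)

/-- The cocycle `σ(U, V) = ℓ(k₂(U) ∩ k₁(V))`. -/
noncomputable def sigmaC {𝕂 : Type*} [Field 𝕂] (ℓ : ℕ+ →* 𝕂ˣ)
    {F G H : Type*} [Group F] [Group G] [Group H] [Finite G]
    (U : Subgroup (F × G)) (V : Subgroup (G × H)) : 𝕂 :=
  ellG ℓ ↑(k2 U ⊓ k1 V)

/-- `τ_K^{I,J} = ∑ möb(U,I) · möb(V,J) · σ(U,V)`, the sum being over all pairs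
of subgroups `(U, V)` with `U ≤ I`, `V ≤ J` and `K ≤ U * V`. -/
noncomputable def tau {𝕂 : Type*} [Field 𝕂] (ℓ : ℕ+ →* 𝕂ˣ)
    {F G H : Type*} [Group F] [Group G] [Group H] [Finite F] [Finite G] [Finite H]
    (I : Subgroup (F × G)) (J : Subgroup (G × H)) (K : Subgroup (F × H)) : 𝕂 :=
  ∑ᶠ q ∈ {q : Subgroup (F × G) × Subgroup (G × H) |
      q.1 ≤ I ∧ q.2 ≤ J ∧ K ≤ starProd q.1 q.2},
    (moeb q.1 I : 𝕂) * (moeb q.2 J : 𝕂) * sigmaC ℓ q.1 q.2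


/-! ### Auxiliary lemmas -/

section Moebius

variable {P : Type*} [PartialOrder P] [Finite P] [Fintype P]

lemma pmoeb_self (i : P) : pmoeb i i = 1 := by rw [pmoeb]; simp

lemma sum_pmoeb (u i : P) (hui : u ≤ i) :
    ∑ v ∈ Finset.univ.filter (fun v => u ≤ v ∧ v ≤ i), pmoeb v i
      = if u = i then 1 else 0 := by
  rcases eq_or_lt_of_le hui with rfl | hlt
  · have : Finset.univ.filter (fun v => u ≤ v ∧ v ≤ u) = {u} := by
      ext v; simp [le_antisymm_iff, and_comm]
    rw [this]
    simp [pmoeb_self]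
  · have hne : u ≠ i := ne_of_lt hlt
    have hsplit : Finset.univ.filter (fun v => u ≤ v ∧ v ≤ i)
        = insert u (Finset.univ.filter (fun v => u < v ∧ v ≤ i)) := by
      ext v
      simp only [Finset.mem_filter, Finset.mem_univ, true_and, Finset.mem_insert]
      constructor
      · rintro ⟨h1, h2⟩
        rcases eq_or_lt_of_le h1 with rfl | h1'
        · exact Or.inl rfl
        · exact Or.inr ⟨h1', h2⟩
      · rintro (rfl | ⟨h1, h2⟩)
        · exact ⟨le_refl _, hui⟩
        · exact ⟨h1.le, h2⟩
    have hnotmem : u ∉ Finset.univ.filter (fun v => u < v ∧ v ≤ i) := by simp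
    rw [hsplit, Finset.sum_insert hnotmem]
    have hfe : Finset.univ.filter (fun v : P => u < v ∧ v ≤ i)
        = ({v : P | u < v ∧ v ≤ i}.toFinite.toFinset) := by
      ext v; simp [Set.Finite.mem_toFinset]
    have hu : pmoeb u i
        = - ∑ v ∈ Finset.univ.filter (fun v : P => u < v ∧ v ≤ i), pmoeb v i := by
      rw [pmoeb, if_neg hne, if_pos hlt, hfe]
      exact congrArg Neg.neg (Finset.sum_attach _ (fun v => pmoeb v i))
    rw [hu, if_neg hne]
    ring

end Moebius

set_option linter.unusedSectionVars false in
lemma weisner {L : Type*} [Lattice L] [Finite L] [Fintype L] {i a : L} (ha : a ≤ i)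
    (hne : a ≠ i) :
    ∀ b, b ≤ a →
      ∑ u ∈ Finset.univ.filter (fun u => u ≤ i ∧ u ⊓ a = b), pmoeb u i = 0 := by
  intro b
  induction b using WellFoundedGT.induction with
  | _ b ih =>
    intro hb
    have hkey : ∑ u ∈ Finset.univ.filter (fun u : L => u ≤ i ∧ b ≤ u ⊓ a), pmoeb u i = 0 := by
      have hset : Finset.univ.filter (fun u : L => u ≤ i ∧ b ≤ u ⊓ a)
          = Finset.univ.filter (fun u : L => b ≤ u ∧ u ≤ i) := by
        ext u
        simp only [Finset.mem_filter, Finset.mem_univ, true_and]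
        constructor
        · rintro ⟨h1, h2⟩; exact ⟨h2.trans inf_le_left, h1⟩
        · rintro ⟨h1, h2⟩; exact ⟨h2, le_inf h1 hb⟩
      rw [hset, sum_pmoeb b i (hb.trans ha), if_neg]
      intro hbi; exact hne (le_antisymm ha (hbi ▸ hb))
    have hmaps : ∀ u ∈ Finset.univ.filter (fun u : L => u ≤ i ∧ b ≤ u ⊓ a),
        u ⊓ a ∈ Finset.univ.filter (fun y : L => b ≤ y ∧ y ≤ a) := by
      intro u hu
      simp only [Finset.mem_filter, Finset.mem_univ, true_and] at hu ⊢
      exact ⟨hu.2, inf_le_right⟩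
    have hfib := Finset.sum_fiberwise_of_maps_to hmaps (fun u => pmoeb u i)
    rw [hkey] at hfib
    have hinner : ∀ y : L, b ≤ y →
        (Finset.univ.filter (fun u : L => u ≤ i ∧ b ≤ u ⊓ a)).filter (fun u => u ⊓ a = y)
        = Finset.univ.filter (fun u : L => u ≤ i ∧ u ⊓ a = y) := by
      intro y hy
      ext u
      simp only [Finset.mem_filter, Finset.mem_univ, true_and]
      constructor
      · rintro ⟨⟨h1, _⟩, h3⟩; exact ⟨h1, h3⟩
      · rintro ⟨h1, h2⟩; exact ⟨⟨h1, h2 ▸ hy⟩, h2⟩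
    have hB : b ∈ Finset.univ.filter (fun y : L => b ≤ y ∧ y ≤ a) := by simp [hb]
    rw [← Finset.add_sum_erase _ _ hB] at hfib
    have hrest : ∑ y ∈ (Finset.univ.filter (fun y : L => b ≤ y ∧ y ≤ a)).erase b,
        ∑ u ∈ (Finset.univ.filter (fun u : L => u ≤ i ∧ b ≤ u ⊓ a)).filter
          (fun u => u ⊓ a = y), pmoeb u i = 0 := by
      apply Finset.sum_eq_zero
      intro y hy
      rw [Finset.mem_erase, Finset.mem_filter] at hy
      obtain ⟨hyb, -, hby, hya⟩ := hy
      rw [hinner y hby]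
      exact ih y (lt_of_le_of_ne hby (Ne.symm hyb)) hya
    rw [hrest, add_zero, hinner b le_rfl] at hfib
    exact hfib

set_option linter.unusedSectionVars false in
lemma inner_zero {L : Type*} [Lattice L] [Finite L] [Fintype L] {i a : L} (ha : a ≤ i)
    (hne : a ≠ i) {𝕂 : Type*} [Field 𝕂] (g : L → 𝕂) :
    ∑ u ∈ Finset.univ, (if u ≤ i then (pmoeb u i : 𝕂) * g (u ⊓ a) else 0) = 0 := by
  rw [← Finset.sum_filter]
  have hmaps : ∀ u ∈ Finset.univ.filter (fun u : L => u ≤ i),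
      u ⊓ a ∈ Finset.univ.filter (fun y : L => y ≤ a) := by
    intro u _; simp
  rw [← Finset.sum_fiberwise_of_maps_to hmaps (fun u => (pmoeb u i : 𝕂) * g (u ⊓ a))]
  apply Finset.sum_eq_zero
  intro y hy
  rw [Finset.mem_filter] at hy
  have hcg : ∑ u ∈ (Finset.univ.filter (fun u : L => u ≤ i)).filter (fun u => u ⊓ a = y),
      (pmoeb u i : 𝕂) * g (u ⊓ a)
      = ∑ u ∈ (Finset.univ.filter (fun u : L => u ≤ i)).filter (fun u => u ⊓ a = y),
      (pmoeb u i : 𝕂) * g y := by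
    apply Finset.sum_congr rfl
    intro u hu
    rw [Finset.mem_filter] at hu
    rw [hu.2]
  rw [hcg, ← Finset.sum_mul]
  have hw := weisner ha hne y hy.2
  have hc : (∑ u ∈ (Finset.univ.filter (fun u : L => u ≤ i)).filter (fun u => u ⊓ a = y),
      (pmoeb u i : 𝕂)) = 0 := by
    rw [Finset.filter_filter]
    rw [show (∑ u ∈ Finset.univ.filter (fun u : L => u ≤ i ∧ u ⊓ a = y), (pmoeb u i : 𝕂))
      = ((∑ u ∈ Finset.univ.filter (fun u : L => u ≤ i ∧ u ⊓ a = y), pmoeb u i : ℤ) : 𝕂) by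
        push_cast; rfl]
    rw [hw]; simp
  rw [hc, zero_mul]

section Main

variable {𝕂 : Type*} [Field 𝕂] (ℓ : ℕ+ →* 𝕂ˣ)
variable {F G H : Type*} [Group F] [Group G] [Group H] [Finite F] [Finite G] [Finite H]

lemma starProd_mono {U U' : Subgroup (F × G)} {V V' : Subgroup (G × H)}
    (hU : U ≤ U') (hV : V ≤ V') : starProd U V ≤ starProd U' V' := by
  rintro ⟨f, t⟩ ⟨s, h1, h2⟩
  exact ⟨s, hU h1, hV h2⟩

lemma ellG_congr {A B : Type*} [Group A] [Finite A] [Group B] [Finite B]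
    (h : Nat.card A = Nat.card B) : ellG ℓ A = ellG ℓ B := by
  have : (⟨Nat.card A, Nat.card_pos⟩ : ℕ+) = ⟨Nat.card B, Nat.card_pos⟩ := Subtype.ext h
  rw [ellG, ellG, this]

lemma sigmaC_congr {U U' : Subgroup (F × G)} {V V' : Subgroup (G × H)}
    (h : k2 U ⊓ k1 V = k2 U' ⊓ k1 V') : sigmaC ℓ U V = sigmaC ℓ U' V' := by
  rw [sigmaC, sigmaC]
  exact ellG_congr ℓ (congrArg (fun S : Subgroup G => Nat.card S) h)

variable (I : Subgroup (F × G)) (J : Subgroup (G × H)) (K : Subgroup (F × H))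

lemma tau_eq_finset_sum [Fintype (Subgroup (F × G))] [Fintype (Subgroup (G × H))] :
    tau ℓ I J K = ∑ U : Subgroup (F × G), ∑ V : Subgroup (G × H),
      if (U ≤ I ∧ V ≤ J ∧ K ≤ starProd U V) then
        (moeb U I : 𝕂) * (moeb V J : 𝕂) * sigmaC ℓ U V else 0 := by
  rw [tau]
  have h1 : {q : Subgroup (F × G) × Subgroup (G × H) |
      q.1 ≤ I ∧ q.2 ≤ J ∧ K ≤ starProd q.1 q.2}
      = ↑(Finset.univ.filter (fun q : Subgroup (F × G) × Subgroup (G × H) =>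
        q.1 ≤ I ∧ q.2 ≤ J ∧ K ≤ starProd q.1 q.2)) := by
    ext q; simp
  rw [h1, finsum_mem_coe_finset, Finset.sum_filter]
  exact Fintype.sum_prod_type _

lemma tau_eq_zero_left (D : Subgroup (F × G)) (hD : ¬ I ≤ D)
    (hcond : ∀ U V, U ≤ I → V ≤ J → K ≤ starProd U V → K ≤ starProd (U ⊓ D) V)
    (hsig : ∀ U V, U ≤ I → V ≤ J → K ≤ starProd U V →
      sigmaC ℓ U V = sigmaC ℓ (U ⊓ D) V) :
    tau ℓ I J K = 0 := by
  letI : Fintype (Subgroup (F × G)) := Fintype.ofFinite _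
  letI : Fintype (Subgroup (G × H)) := Fintype.ofFinite _
  rw [tau_eq_finset_sum, Finset.sum_comm]
  apply Finset.sum_eq_zero
  intro V _
  by_cases hV : V ≤ J
  swap
  · apply Finset.sum_eq_zero; intro U _; rw [if_neg]; tauto
  have haI : I ⊓ D ≤ I := inf_le_left
  have hane : I ⊓ D ≠ I := fun hh => hD (inf_eq_left.mp hh)
  have hterm : ∀ U : Subgroup (F × G),
      (if (U ≤ I ∧ V ≤ J ∧ K ≤ starProd U V) then
        (moeb U I : 𝕂) * (moeb V J : 𝕂) * sigmaC ℓ U V else 0)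
      = if U ≤ I then (pmoeb U I : 𝕂) *
          (if K ≤ starProd (U ⊓ (I ⊓ D)) V then
            (moeb V J : 𝕂) * sigmaC ℓ (U ⊓ (I ⊓ D)) V else 0) else 0 := by
    intro U
    by_cases hUI : U ≤ I
    · have hUa : U ⊓ (I ⊓ D) = U ⊓ D := by rw [← inf_assoc, inf_eq_left.mpr hUI]
      by_cases hKUV : K ≤ starProd U V
      · rw [if_pos ⟨hUI, hV, hKUV⟩, if_pos hUI, if_pos]
        · rw [hUa, ← hsig U V hUI hV hKUV]
          simp only [moeb]; ring
        · rw [hUa]; exact hcond U V hUI hV hKUV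
      · rw [if_neg (fun hcon => hKUV hcon.2.2), if_pos hUI, if_neg, mul_zero]
        intro hc
        rw [hUa] at hc
        exact hKUV (hc.trans (starProd_mono inf_le_left le_rfl))
    · rw [if_neg (fun hcon => hUI hcon.1), if_neg hUI]
  simp only [hterm]
  exact inner_zero haI hane
    (fun y => if K ≤ starProd y V then (moeb V J : 𝕂) * sigmaC ℓ y V else 0)

lemma tau_eq_zero_right (D : Subgroup (G × H)) (hD : ¬ J ≤ D)
    (hcond : ∀ U V, U ≤ I → V ≤ J → K ≤ starProd U V → K ≤ starProd U (V ⊓ D))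
    (hsig : ∀ U V, U ≤ I → V ≤ J → K ≤ starProd U V →
      sigmaC ℓ U V = sigmaC ℓ U (V ⊓ D)) :
    tau ℓ I J K = 0 := by
  letI : Fintype (Subgroup (F × G)) := Fintype.ofFinite _
  letI : Fintype (Subgroup (G × H)) := Fintype.ofFinite _
  rw [tau_eq_finset_sum]
  apply Finset.sum_eq_zero
  intro U _
  by_cases hU : U ≤ I
  swap
  · apply Finset.sum_eq_zero; intro V _; rw [if_neg]; tauto
  have haJ : J ⊓ D ≤ J := inf_le_left
  have hane : J ⊓ D ≠ J := fun hh => hD (inf_eq_left.mp hh)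
  have hterm : ∀ V : Subgroup (G × H),
      (if (U ≤ I ∧ V ≤ J ∧ K ≤ starProd U V) then
        (moeb U I : 𝕂) * (moeb V J : 𝕂) * sigmaC ℓ U V else 0)
      = if V ≤ J then (pmoeb V J : 𝕂) *
          (if K ≤ starProd U (V ⊓ (J ⊓ D)) then
            (moeb U I : 𝕂) * sigmaC ℓ U (V ⊓ (J ⊓ D)) else 0) else 0 := by
    intro V
    by_cases hVJ : V ≤ J
    · have hVa : V ⊓ (J ⊓ D) = V ⊓ D := by rw [← inf_assoc, inf_eq_left.mpr hVJ]
      by_cases hKUV : K ≤ starProd U V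
      · rw [if_pos ⟨hU, hVJ, hKUV⟩, if_pos hVJ, if_pos]
        · rw [hVa, ← hsig U V hU hVJ hKUV]
          simp only [moeb]; ring
        · rw [hVa]; exact hcond U V hU hVJ hKUV
      · rw [if_neg (fun hcon => hKUV hcon.2.2), if_pos hVJ, if_neg, mul_zero]
        intro hc
        rw [hVa] at hc
        exact hKUV (hc.trans (starProd_mono le_rfl inf_le_left))
    · rw [if_neg (fun hcon => hVJ hcon.2.1), if_neg hVJ]
  simp only [hterm]
  exact inner_zero haJ hane
    (fun y => if K ≤ starProd U y then (moeb U I : 𝕂) * sigmaC ℓ U y else 0)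

end Main


section Helpers

variable {R' S' : Type*} [Group R'] [Group S']

lemma mem_k2' {W : Subgroup (R' × S')} {s : S'} : s ∈ k2 W ↔ ((1 : R'), s) ∈ W := by
  rw [k2, Subgroup.mem_comap, MonoidHom.inr_apply]

lemma mem_k1' {W : Subgroup (R' × S')} {r : R'} : r ∈ k1 W ↔ (r, (1 : S')) ∈ W := by
  rw [k1, Subgroup.mem_comap, MonoidHom.inl_apply]

lemma mem_p1' {W : Subgroup (R' × S')} {r : R'} : r ∈ p1 W ↔ ∃ s, (r, s) ∈ W := by
  rw [p1, Subgroup.mem_map]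
  constructor
  · rintro ⟨⟨a, b⟩, hab, rfl⟩; exact ⟨b, hab⟩
  · rintro ⟨s, hs⟩; exact ⟨(r, s), hs, rfl⟩

lemma mem_p2' {W : Subgroup (R' × S')} {s : S'} : s ∈ p2 W ↔ ∃ r, (r, s) ∈ W := by
  rw [p2, Subgroup.mem_map]
  constructor
  · rintro ⟨⟨a, b⟩, hab, rfl⟩; exact ⟨a, hab⟩
  · rintro ⟨r, hr⟩; exact ⟨(r, s), hr, rfl⟩

end Helpers

/-- If `τ_K^{I,J} ≠ 0` then `(I, J)` is strongly compatible and `K` is an adequate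
subgroup of `I * J`. -/
theorem strongly_compatible_adequate_of_tau_ne_zero
    {𝕂 : Type*} [Field 𝕂] [CharZero 𝕂] (ℓ : ℕ+ →* 𝕂ˣ)
    (F G H : Type*) [Group F] [Group G] [Group H] [Finite F] [Finite G] [Finite H]
    (I : Subgroup (F × G)) (J : Subgroup (G × H)) (K : Subgroup (F × H))
    (h : tau ℓ I J K ≠ 0) :
    p2 I = p1 J ∧ K ≤ starProd I J ∧
      p1 K = p1 (starProd I J) ∧ p2 K = p2 (starProd I J) := by
  have hne : {q : Subgroup (F × G) × Subgroup (G × H) |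
      q.1 ≤ I ∧ q.2 ≤ J ∧ K ≤ starProd q.1 q.2}.Nonempty := by
    by_contra hemp
    rw [Set.not_nonempty_iff_eq_empty] at hemp
    exact h (by rw [tau, hemp, finsum_mem_empty])
  obtain ⟨⟨U0, V0⟩, hU0, hV0, hK0⟩ := hne
  have hKIJ : K ≤ starProd I J := hK0.trans (starProd_mono hU0 hV0)
  -- Claim 1: I ≤ ⊤ × p1 J
  have claim1 : I ≤ (⊤ : Subgroup F).prod (p1 J) := by
    by_contra hD
    refine h (tau_eq_zero_left ℓ I J K _ hD ?_ ?_)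
    · intro U V hUI hVJ hKUV x hx
      obtain ⟨s, h1, h2⟩ := hKUV hx
      refine ⟨s, Subgroup.mem_inf.mpr ⟨h1, Subgroup.mem_prod.mpr ⟨trivial, ?_⟩⟩, h2⟩
      exact mem_p1'.mpr ⟨x.2, hVJ h2⟩
    · intro U V hUI hVJ hKUV
      apply sigmaC_congr
      apply le_antisymm
      · intro s hs
        rw [Subgroup.mem_inf] at hs ⊢
        obtain ⟨hs1, hs2⟩ := hs
        refine ⟨?_, hs2⟩
        rw [mem_k2'] at hs1 ⊢
        refine Subgroup.mem_inf.mpr ⟨hs1, Subgroup.mem_prod.mpr ⟨trivial, ?_⟩⟩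
        exact mem_p1'.mpr ⟨1, hVJ (mem_k1'.mp hs2)⟩
      · exact inf_le_inf_right _ (Subgroup.comap_mono inf_le_left)
  -- Claim 2: J ≤ p2 I × ⊤
  have claim2 : J ≤ (p2 I).prod (⊤ : Subgroup H) := by
    by_contra hD
    refine h (tau_eq_zero_right ℓ I J K _ hD ?_ ?_)
    · intro U V hUI hVJ hKUV x hx
      obtain ⟨s, h1, h2⟩ := hKUV hx
      refine ⟨s, h1, Subgroup.mem_inf.mpr ⟨h2, Subgroup.mem_prod.mpr ⟨?_, trivial⟩⟩⟩
      exact mem_p2'.mpr ⟨x.1, hUI h1⟩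
    · intro U V hUI hVJ hKUV
      apply sigmaC_congr
      apply le_antisymm
      · intro s hs
        rw [Subgroup.mem_inf] at hs ⊢
        obtain ⟨hs1, hs2⟩ := hs
        refine ⟨hs1, ?_⟩
        rw [mem_k1'] at hs2 ⊢
        refine Subgroup.mem_inf.mpr ⟨hs2, Subgroup.mem_prod.mpr ⟨?_, trivial⟩⟩
        exact mem_p2'.mpr ⟨1, hUI (mem_k2'.mp hs1)⟩
      · exact inf_le_inf_left _ (Subgroup.comap_mono inf_le_left)
  -- Claim 3: I ≤ p1 K × ⊤
  have claim3 : I ≤ (p1 K).prod (⊤ : Subgroup G) := by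
    by_contra hD
    refine h (tau_eq_zero_left ℓ I J K _ hD ?_ ?_)
    · intro U V hUI hVJ hKUV x hx
      obtain ⟨s, h1, h2⟩ := hKUV hx
      refine ⟨s, Subgroup.mem_inf.mpr ⟨h1, Subgroup.mem_prod.mpr ⟨?_, trivial⟩⟩, h2⟩
      exact mem_p1'.mpr ⟨x.2, hx⟩
    · intro U V hUI hVJ hKUV
      apply sigmaC_congr
      apply le_antisymm
      · intro s hs
        rw [Subgroup.mem_inf] at hs ⊢
        obtain ⟨hs1, hs2⟩ := hs
        refine ⟨?_, hs2⟩
        rw [mem_k2'] at hs1 ⊢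
        exact Subgroup.mem_inf.mpr
          ⟨hs1, Subgroup.mem_prod.mpr ⟨one_mem _, trivial⟩⟩
      · exact inf_le_inf_right _ (Subgroup.comap_mono inf_le_left)
  -- Claim 4: J ≤ ⊤ × p2 K
  have claim4 : J ≤ (⊤ : Subgroup G).prod (p2 K) := by
    by_contra hD
    refine h (tau_eq_zero_right ℓ I J K _ hD ?_ ?_)
    · intro U V hUI hVJ hKUV x hx
      obtain ⟨s, h1, h2⟩ := hKUV hx
      refine ⟨s, h1, Subgroup.mem_inf.mpr ⟨h2, Subgroup.mem_prod.mpr ⟨trivial, ?_⟩⟩⟩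
      exact mem_p2'.mpr ⟨x.1, hx⟩
    · intro U V hUI hVJ hKUV
      apply sigmaC_congr
      apply le_antisymm
      · intro s hs
        rw [Subgroup.mem_inf] at hs ⊢
        obtain ⟨hs1, hs2⟩ := hs
        refine ⟨hs1, ?_⟩
        rw [mem_k1'] at hs2 ⊢
        exact Subgroup.mem_inf.mpr
          ⟨hs2, Subgroup.mem_prod.mpr ⟨trivial, one_mem _⟩⟩
      · exact inf_le_inf_left _ (Subgroup.comap_mono inf_le_left)
  refine ⟨?_, hKIJ, ?_, ?_⟩
  · apply le_antisymm
    · intro s hs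
      obtain ⟨r, hr⟩ := mem_p2'.mp hs
      exact (Subgroup.mem_prod.mp (claim1 hr)).2
    · intro s hs
      obtain ⟨t, ht⟩ := mem_p1'.mp hs
      exact (Subgroup.mem_prod.mp (claim2 ht)).1
  · apply le_antisymm
    · exact Subgroup.map_mono hKIJ
    · intro f hf
      obtain ⟨t, ht⟩ := mem_p1'.mp hf
      obtain ⟨s, hfs, -⟩ := ht
      exact (Subgroup.mem_prod.mp (claim3 hfs)).1
  · apply le_antisymm
    · exact Subgroup.map_mono hKIJ
    · intro t ht
      obtain ⟨f, hf⟩ := mem_p2'.mp ht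
      obtain ⟨s, -, hst⟩ := hf
      exact (Subgroup.mem_prod.mp (claim4 hst)).2


end SubgroupCat
end
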